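/- Let A, B ⊆ {1,…,n} with n ∈ A ∩ B, and suppose λ_A and λ_B are conjugate to each other. Then A \ B and B \ A are n-symmetric sets. -/

import Mathlib

/-!
Let `a₀ > a₁ > ⋯ > a_{m-1}` be the elements of `A` (so `a₀ = n`), hence `λ_A = (aᵢ - (m - 1 - i))ᵢ`
and its conjugate `λ'` has `N = n + 1 - m` parts. For `y ≤ n` with `y ∉ A`, let `r` be the number
of elements of `A` above `y`. Exactly the first `r` parts of `λ_A` exceed `j = y + r - m`, so
`λ'ⱼ = r` and the β-number `λ'ⱼ + (N - 1 - j)` equals `n - y`. Hence the β-set of `λ'`, which has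
at most `N = |A'|` elements, is `n - A'`, and conjugacy forces `B = n - A'`. Then
`A \ B = A ∩ (n - A)` and `B \ A = A' ∩ (n - A')` are `n`-symmetric.
-/

/-- A partition: weakly decreasing list of positive integers. -/
def IsPartition (l : List ℕ) : Prop :=
  l.Pairwise (· ≥ ·) ∧ ∀ x ∈ l, 0 < x

/-- The conjugate partition: `λ'ᵢ = #{j : λⱼ ≥ i}` (0-indexed). -/
def conjugatePart (l : List ℕ) : List ℕ :=
  (List.range (l.headD 0)).map (fun i => (l.filter (fun p => decide (i + 1 ≤ p))).length)

/-- The multiset of hook lengths of the Young diagram of `l` (rows and columns 0-indexed):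
`h(i,j) = λᵢ - j + #{i' > i : λᵢ' > j}`. -/
def hooks (l : List ℕ) : Multiset ℕ :=
  ((List.range l.length).flatMap (fun i =>
    (List.range (l.getD i 0)).map (fun j =>
      l.getD i 0 - j + ((l.drop (i + 1)).filter (fun p => decide (j < p))).length)) : List ℕ)

/-- The β-set `{λᵢ + m - i : 1 ≤ i ≤ m}` (here 0-indexed: `λᵢ + (m - 1 - i)`). -/
def betaSet (l : List ℕ) : Finset ℕ :=
  ((List.range l.length).map (fun i => l.getD i 0 + (l.length - 1 - i))).toFinset

/-- `λ_A`: the partition whose β-set is `A`. -/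
def partitionOfBeta (A : Finset ℕ) : List ℕ :=
  ((A.sort (· ≤ ·)).reverse).mapIdx (fun i a => a - (A.card - 1 - i))

/-- A set `S` is `n`-symmetric if `S = {n - x : x ∈ S}`. -/
def NSymm (n : ℕ) (S : Finset ℕ) : Prop :=
  S.image (fun x => n - x) = S

/-- Sum multiset `{x + y : x ∈ M, y ∈ N}` with multiplicity. -/
def msAdd (M N : Multiset ℕ) : Multiset ℕ :=
  M.bind (fun x => N.map (fun y => x + y))

section Pairwise

-- `Decidable.decide` is spelled out: inside `List.Pairwise`, `decide` means `List.Pairwise.decide`.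
variable {α : Type*} [Preorder α] [DecidableLT α] {l : List α}

theorem List.Pairwise.lt_getElem_iff_lt_length_filter
    (hl : l.Pairwise (· ≥ ·)) (y : α) {i : ℕ} (hi : i < l.length) :
    y < l[i] ↔ i < (l.filter (fun x => Decidable.decide (y < x))).length := by
  induction l generalizing i with
  | nil => simp at hi
  | cons a t ih =>
    rw [pairwise_cons] at hl
    by_cases hya : y < a
    · rw [filter_cons_of_pos (by simpa using hya)]
      cases i with
      | zero => simpa using hya
      | succ i => simpa using ih hl.2 (by simpa using hi)
    · have hnone : ∀ x ∈ a :: t, ¬ y < x := by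
        rintro x (_ | ⟨_, hx⟩)
        · exact hya
        · exact fun hyx => hya (hyx.trans_le (hl.1 x hx))
      rw [filter_eq_nil_iff.mpr (by simpa using hnone)]
      simpa using hnone _ (getElem_mem hi)

theorem List.Pairwise.length_filter_lt_eq
    (hl : l.Pairwise (· ≥ ·)) (y : α) {r : ℕ} (hr : r ≤ l.length)
    (h : ∀ i (hi : i < l.length), y < l[i] ↔ i < r) :
    (l.filter (fun x => Decidable.decide (y < x))).length = r := by
  have hc := length_filter_le (fun x => Decidable.decide (y < x)) l
  by_contra hne
  have hi : min (l.filter (fun x => Decidable.decide (y < x))).length r < l.length := by omega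
  have := (hl.lt_getElem_iff_lt_length_filter y hi).symm.trans (h _ hi)
  omega

end Pairwise

theorem List.SortedGT.getElem_add_sub_le {l : List ℕ} (hl : l.SortedGT) {i j : ℕ} (hij : i ≤ j)
    (hj : j < l.length) : l[j] + (j - i) ≤ l[i] := by
  induction j, hij using Nat.le_induction with
  | base => simp
  | succ j hij ih =>
    have hstep : l[j + 1] < l[j] := hl.strictAnti_get (Fin.mk_lt_mk.2 (Nat.lt_succ_self j))
    have := ih (by omega)
    omega

theorem mem_betaSet {l : List ℕ} {x : ℕ} :
    x ∈ betaSet l ↔ ∃ (i : ℕ) (hi : i < l.length), l[i] + (l.length - 1 - i) = x := by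
  simp only [betaSet, List.mem_toFinset, List.mem_map, List.mem_range]
  constructor
  · rintro ⟨i, hi, rfl⟩
    exact ⟨i, hi, by rw [List.getD_eq_getElem _ _ hi]⟩
  · rintro ⟨i, hi, rfl⟩
    exact ⟨i, hi, by rw [List.getD_eq_getElem _ _ hi]⟩

theorem card_betaSet_le (l : List ℕ) : (betaSet l).card ≤ l.length :=
  (List.toFinset_card_le _).trans (by simp)

theorem length_conjugatePart (l : List ℕ) : (conjugatePart l).length = l.headD 0 := by
  simp [conjugatePart]

theorem getElem_conjugatePart (l : List ℕ) {j : ℕ} (hj : j < (conjugatePart l).length) :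
    (conjugatePart l)[j] = (l.filter (fun p => decide (j < p))).length := by
  simp [conjugatePart]

def sortDesc (A : Finset ℕ) : List ℕ := (A.sort (· ≤ ·)).reverse

section sortDesc

variable (A : Finset ℕ)

theorem sortedGT_sortDesc : (sortDesc A).SortedGT :=
  (Finset.sortedLT_sort A).reverse

theorem length_sortDesc : (sortDesc A).length = A.card := by
  simp [sortDesc]

theorem mem_sortDesc {x : ℕ} : x ∈ sortDesc A ↔ x ∈ A := by
  simp [sortDesc]

theorem sub_le_getElem_sortDesc {i : ℕ} (hi : i < (sortDesc A).length) :
    A.card - 1 - i ≤ (sortDesc A)[i] := by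
  have := (sortedGT_sortDesc A).getElem_add_sub_le (Nat.le_sub_one_of_lt hi) (by omega)
  have := length_sortDesc A
  omega

theorem length_partitionOfBeta : (partitionOfBeta A).length = A.card := by
  simp [partitionOfBeta]

theorem getElem_partitionOfBeta {i : ℕ} (hi : i < (partitionOfBeta A).length) :
    (partitionOfBeta A)[i] =
      (sortDesc A)[i]'(by rwa [length_partitionOfBeta, ← length_sortDesc] at hi) -
        (A.card - 1 - i) := by
  simp only [partitionOfBeta, List.getElem_mapIdx]
  rfl

theorem getElem_partitionOfBeta_add {i : ℕ} (hi : i < (partitionOfBeta A).length) :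
    (partitionOfBeta A)[i] + (A.card - 1 - i) =
      (sortDesc A)[i]'(by rwa [length_partitionOfBeta, ← length_sortDesc] at hi) := by
  have := sub_le_getElem_sortDesc A (i := i)
    (by rwa [length_partitionOfBeta, ← length_sortDesc] at hi)
  rw [getElem_partitionOfBeta]
  omega

theorem betaSet_partitionOfBeta : betaSet (partitionOfBeta A) = A := by
  ext x
  simp only [mem_betaSet, length_partitionOfBeta]
  rw [← mem_sortDesc, List.mem_iff_getElem]
  constructor
  · rintro ⟨i, hi, rfl⟩
    exact ⟨i, by rwa [length_sortDesc], (getElem_partitionOfBeta_add A _).symm⟩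
  · rintro ⟨i, hi, rfl⟩
    exact ⟨i, by rwa [← length_sortDesc], getElem_partitionOfBeta_add A _⟩

theorem pairwise_partitionOfBeta : (partitionOfBeta A).Pairwise (· ≥ ·) := by
  rw [List.pairwise_iff_getElem]
  intro i k hi hk hik
  have := (sortedGT_sortDesc A).getElem_add_sub_le hik.le
    (by rwa [length_partitionOfBeta, ← length_sortDesc] at hk)
  rw [getElem_partitionOfBeta, getElem_partitionOfBeta]
  omega

end sortDesc

theorem getElem_sortDesc_zero {n : ℕ} {A : Finset ℕ} (hAn : ∀ a ∈ A, a ≤ n) (hnA : n ∈ A)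
    (h : 0 < (sortDesc A).length) : (sortDesc A)[0] = n := by
  obtain ⟨k, hk, hkn⟩ := List.getElem_of_mem ((mem_sortDesc A).2 hnA)
  have := (sortedGT_sortDesc A).getElem_add_sub_le (Nat.zero_le k) hk
  have := hAn _ ((mem_sortDesc A).1 (List.getElem_mem h))
  omega

theorem headD_partitionOfBeta {n : ℕ} {A : Finset ℕ} (hAn : ∀ a ∈ A, a ≤ n) (hnA : n ∈ A) :
    (partitionOfBeta A).headD 0 = n + 1 - A.card := by
  have hm : 0 < A.card := Finset.card_pos.2 ⟨n, hnA⟩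
  have hl : 0 < (partitionOfBeta A).length := by rwa [length_partitionOfBeta]
  have h0 := getElem_partitionOfBeta_add A hl
  rw [getElem_sortDesc_zero hAn hnA] at h0
  simp only [List.headD_eq_head?, List.head?_eq_getElem?, List.getElem?_eq_getElem hl,
    Option.getD_some]
  omega

def countAbove (A : Finset ℕ) (y : ℕ) : ℕ :=
  ((sortDesc A).filter (fun x => decide (y < x))).length

section countAbove

variable {A : Finset ℕ} {y : ℕ}

theorem countAbove_le_card : countAbove A y ≤ A.card :=
  length_sortDesc A ▸ List.length_filter_le _ _

theorem lt_getElem_sortDesc_iff {i : ℕ} (hi : i < (sortDesc A).length) :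
    y < (sortDesc A)[i] ↔ i < countAbove A y :=
  (sortedGT_sortDesc A).sortedGE.pairwise.lt_getElem_iff_lt_length_filter y hi

theorem getElem_sortDesc_lt (hyA : y ∉ A) {i : ℕ} (hi : i < (sortDesc A).length)
    (hri : countAbove A y ≤ i) : (sortDesc A)[i] < y := by
  have hne : (sortDesc A)[i] ≠ y := fun h => hyA ((mem_sortDesc A).1 (h ▸ List.getElem_mem hi))
  have := (lt_getElem_sortDesc_iff (y := y) hi).not.2 (by omega)
  omega

theorem card_le_add_countAbove (hyA : y ∉ A) : A.card ≤ y + countAbove A y := by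
  have hlen := length_sortDesc A
  by_contra! h
  have := (sortedGT_sortDesc A).getElem_add_sub_le (i := countAbove A y) (j := A.card - 1)
    (by omega) (by omega)
  have := getElem_sortDesc_lt hyA (i := countAbove A y) (by omega) le_rfl
  omega

theorem add_countAbove_le {n : ℕ} (hAn : ∀ a ∈ A, a ≤ n) (hyn : y ≤ n) :
    y + countAbove A y ≤ n := by
  have hlen := length_sortDesc A
  have hr := countAbove_le_card (A := A) (y := y)
  rcases Nat.eq_zero_or_pos (countAbove A y) with h | h
  · omega
  have := (sortedGT_sortDesc A).getElem_add_sub_le (i := 0) (j := countAbove A y - 1)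
    (by omega) (by omega)
  have := (lt_getElem_sortDesc_iff (A := A) (y := y) (i := countAbove A y - 1)
      (by omega)).2 (by omega)
  have h0 : 0 < (sortDesc A).length := by omega
  have := hAn _ ((mem_sortDesc A).1 (List.getElem_mem h0))
  omega

theorem lt_getElem_partitionOfBeta_iff (hyA : y ∉ A) {i : ℕ}
    (hi : i < (partitionOfBeta A).length) :
    y + countAbove A y - A.card < (partitionOfBeta A)[i] ↔ i < countAbove A y := by
  have hi' : i < (sortDesc A).length := by rwa [length_partitionOfBeta, ← length_sortDesc] at hi
  have hpart := getElem_partitionOfBeta_add A hi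
  have hmr := card_le_add_countAbove hyA
  have hr : countAbove A y ≤ A.card := countAbove_le_card
  have hlen := length_sortDesc A
  constructor
  · intro h
    by_contra! hri
    have := (sortedGT_sortDesc A).getElem_add_sub_le hri hi'
    have := getElem_sortDesc_lt hyA (i := countAbove A y) (by omega) le_rfl
    omega
  · intro hir
    have := (sortedGT_sortDesc A).getElem_add_sub_le (i := i) (j := countAbove A y - 1)
      (by omega) (by omega)
    have := (lt_getElem_sortDesc_iff (A := A) (y := y) (i := countAbove A y - 1)
      (by omega)).2 (by omega)
    omega

theorem getElem_conjugatePart_partitionOfBeta (hyA : y ∉ A)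
    (hj : y + countAbove A y - A.card < (conjugatePart (partitionOfBeta A)).length) :
    (conjugatePart (partitionOfBeta A))[y + countAbove A y - A.card] = countAbove A y := by
  rw [getElem_conjugatePart]
  exact (pairwise_partitionOfBeta A).length_filter_lt_eq _
    (by rw [length_partitionOfBeta]; exact countAbove_le_card)
    (fun i hi => lt_getElem_partitionOfBeta_iff hyA hi)

end countAbove

theorem sub_mem_betaSet_conjugatePart {n : ℕ} {A : Finset ℕ} (hAn : ∀ a ∈ A, a ≤ n)
    (hnA : n ∈ A) {y : ℕ} (hyn : y ≤ n) (hyA : y ∉ A) :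
    n - y ∈ betaSet (conjugatePart (partitionOfBeta A)) := by
  have hN := length_conjugatePart (partitionOfBeta A)
  rw [headD_partitionOfBeta hAn hnA] at hN
  have hmr := card_le_add_countAbove hyA
  have hrn := add_countAbove_le hAn hyn
  have hj : y + countAbove A y - A.card < (conjugatePart (partitionOfBeta A)).length := by omega
  refine mem_betaSet.2 ⟨_, hj, ?_⟩
  rw [getElem_conjugatePart_partitionOfBeta hyA hj]
  omega

theorem betaSet_conjugatePart_partitionOfBeta {n : ℕ} {A : Finset ℕ} (hAn : ∀ a ∈ A, a ≤ n)
    (hnA : n ∈ A) :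
    betaSet (conjugatePart (partitionOfBeta A)) =
      (Finset.range (n + 1) \ A).image (n - ·) := by
  have hsub : A ⊆ Finset.range (n + 1) := fun a ha => Finset.mem_range_succ_iff.2 (hAn a ha)
  have hcard : ((Finset.range (n + 1) \ A).image (n - ·)).card = n + 1 - A.card := by
    rw [Finset.card_image_of_injOn, Finset.card_sdiff_of_subset hsub, Finset.card_range]
    intro x hx z hz hxz
    simp only [Finset.coe_sdiff, Set.mem_sdiff, Finset.mem_coe, Finset.mem_range] at hx hz hxz
    omega
  symm
  refine Finset.eq_of_subset_of_card_le ?_ ?_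
  · simp only [Finset.image_subset_iff, Finset.mem_sdiff, Finset.mem_range]
    exact fun y ⟨hyn, hyA⟩ => sub_mem_betaSet_conjugatePart hAn hnA (by omega) hyA
  · rw [hcard, ← headD_partitionOfBeta hAn hnA, ← length_conjugatePart]
    exact card_betaSet_le _

theorem nSymm_of_forall_mem {n : ℕ} {S : Finset ℕ} (hS : ∀ x ∈ S, x ≤ n ∧ n - x ∈ S) :
    NSymm n S := by
  ext x
  simp only [Finset.mem_image]
  refine ⟨?_, fun hx => ⟨n - x, (hS x hx).2, by have := (hS x hx).1; omega⟩⟩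
  rintro ⟨z, hz, rfl⟩
  exact (hS z hz).2

theorem nSymm_sdiff_image_compl {n : ℕ} {A : Finset ℕ} (hAn : ∀ a ∈ A, a ≤ n) :
    NSymm n (A \ (Finset.range (n + 1) \ A).image (n - ·)) ∧
      NSymm n ((Finset.range (n + 1) \ A).image (n - ·) \ A) := by
  have hmem : ∀ x, x ∈ (Finset.range (n + 1) \ A).image (n - ·) ↔ x ≤ n ∧ n - x ∉ A := by
    intro x
    simp only [Finset.mem_image, Finset.mem_sdiff, Finset.mem_range]
    refine ⟨?_, fun ⟨hx, hxA⟩ => ⟨n - x, ⟨by omega, hxA⟩, by omega⟩⟩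
    rintro ⟨z, ⟨hz, hzA⟩, rfl⟩
    exact ⟨by omega, by rwa [Nat.sub_sub_self (by omega)]⟩
  constructor <;> refine nSymm_of_forall_mem fun x hx => ?_ <;>
    simp only [Finset.mem_sdiff, hmem, not_and, not_not] at hx ⊢
  · have hxn := hAn x hx.1
    refine ⟨hxn, hx.2 hxn, fun _ => ?_⟩
    rw [Nat.sub_sub_self hxn]
    exact hx.1
  · refine ⟨hx.1.1, ⟨by omega, ?_⟩, hx.1.2⟩
    rw [Nat.sub_sub_self hx.1.1]
    exact hx.2

theorem stmt_6_general (n : ℕ) (A B : Finset ℕ) (hA : A ⊆ Finset.Icc 1 n)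
    (hnA : n ∈ A)
    (hconj : conjugatePart (partitionOfBeta A) = partitionOfBeta B) :
    NSymm n (A \ B) ∧ NSymm n (B \ A) := by
  have hAn : ∀ a ∈ A, a ≤ n := fun a ha => (Finset.mem_Icc.1 (hA ha)).2
  have hB : B = (Finset.range (n + 1) \ A).image (n - ·) := by
    rw [← betaSet_partitionOfBeta B, ← hconj, betaSet_conjugatePart_partitionOfBeta hAn hnA]
  exact hB ▸ nSymm_sdiff_image_compl hAn

/-- Necessity: if `λ_A` and `λ_B` are conjugate, then `A \ B` and `B \ A` are
`n`-symmetric sets. -/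
theorem stmt_6 (n : ℕ) (A B : Finset ℕ) (hA : A ⊆ Finset.Icc 1 n) (hB : B ⊆ Finset.Icc 1 n)
    (hnA : n ∈ A) (hnB : n ∈ B)
    (hconj : conjugatePart (partitionOfBeta A) = partitionOfBeta B) :
    NSymm n (A \ B) ∧ NSymm n (B \ A) :=
  stmt_6_general n A B hA hnA hconj
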